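/- Let ℏ ≠ 0, a, b, t ∈ ℂ and m a nonnegative integer. The quantized Painlevé IV Hamiltonian H_IV(Φ) = x ℏ² Φ'' + (x² − tx − b) ℏ Φ' − a x Φ − (a − 2b)t Φ maps polynomials of degree ≤ m to polynomials of degree ≤ m if and only if a = mℏ. -/

import Mathlib

open Polynomial

/-- The quantized Painlevé IV Hamiltonian acting on polynomials:
`H_IV Φ = x(ℏ d/dx)² Φ + (x² − tx − b)(ℏ d/dx) Φ − a·x·Φ − (a − 2b)t·Φ`. -/
noncomputable def HIV (ℏ a b t : ℂ) (Φ : ℂ[X]) : ℂ[X] :=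
  X * (ℏ ^ 2 • derivative (derivative Φ))
    + (X ^ 2 - C t * X - C b) * (ℏ • derivative Φ)
    - C a * X * Φ - C ((a - 2 * b) * t) * Φ

/-!
`H_IV` raises degrees by at most one, and the coefficient of `x^(k+1)` in `H_IV Φ` only involves
the coefficients of `x^k, x^(k+1), x^(k+2)` in `Φ`; the one of `x^k` enters with the factor
`kℏ - a`. So for `deg Φ ≤ m` the only obstruction to `deg H_IV Φ ≤ m` is `(mℏ - a) Φ_m`,
which vanishes for all such `Φ` exactly when `a = mℏ`.
-/

section HIV

variable (ℏ a b t : ℂ)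

lemma coeff_X_mul_derivative (Φ : ℂ[X]) (k : ℕ) :
    (X * derivative Φ).coeff k = k * Φ.coeff k := by
  cases k with
  | zero => simp [mul_coeff_zero]
  | succ j => rw [coeff_X_mul, coeff_derivative]; push_cast; ring

theorem coeff_HIV_succ (Φ : ℂ[X]) (k : ℕ) :
    (HIV ℏ a b t Φ).coeff (k + 1) =
      (k * ℏ - a) * Φ.coeff k - ((k + 1) * ℏ + a - 2 * b) * t * Φ.coeff (k + 1)
        + (k + 2) * ((k + 1) * ℏ - b) * ℏ * Φ.coeff (k + 2) := by
  have hsplit : (X ^ 2 - C t * X - C b) * (ℏ • derivative Φ)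
      = C ℏ * (X * (X * derivative Φ)) - C (t * ℏ) * (X * derivative Φ)
        - C (b * ℏ) * derivative Φ := by
    simp only [smul_eq_C_mul, C_mul]; ring
  unfold HIV
  rw [hsplit, mul_assoc (C a), smul_eq_C_mul]
  simp only [coeff_sub, coeff_add, coeff_X_mul, coeff_C_mul, coeff_X_mul_derivative,
    coeff_derivative]
  push_cast
  ring

variable {ℏ a b t} {Φ : ℂ[X]} {m : ℕ}

theorem coeff_HIV_succ_of_degree_le (hΦ : Φ.degree ≤ m) {k : ℕ} (hk : m ≤ k) :
    (HIV ℏ a b t Φ).coeff (k + 1) = (k * ℏ - a) * Φ.coeff k := by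
  rw [coeff_HIV_succ, coeff_eq_zero_of_degree_lt (n := k + 1),
    coeff_eq_zero_of_degree_lt (n := k + 2)]
  · ring
  all_goals exact hΦ.trans_lt (by exact_mod_cast (by omega))

theorem degree_HIV_le_iff (hΦ : Φ.degree ≤ m) :
    (HIV ℏ a b t Φ).degree ≤ m ↔ (m * ℏ - a) * Φ.coeff m = 0 := by
  rw [degree_le_iff_coeff_zero]
  constructor
  · intro h
    rw [← coeff_HIV_succ_of_degree_le hΦ le_rfl]
    exact h _ (by exact_mod_cast m.lt_succ_self)
  · intro h n hn
    have hmn : m < n := by exact_mod_cast hn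
    obtain ⟨k, rfl, hmk⟩ : ∃ k, n = k + 1 ∧ m ≤ k := ⟨n - 1, by omega, by omega⟩
    rw [coeff_HIV_succ_of_degree_le hΦ hmk]
    rcases hmk.eq_or_lt with rfl | hlt
    · exact h
    · rw [coeff_eq_zero_of_degree_lt (hΦ.trans_lt (by exact_mod_cast hlt)), mul_zero]

end HIV

theorem stmt3_general (ℏ a b t : ℂ) (m : ℕ) :
    (∀ Φ : ℂ[X], Φ.degree ≤ m → (HIV ℏ a b t Φ).degree ≤ m) ↔ a = m * ℏ := by
  constructor
  · intro h
    have hXm := (degree_HIV_le_iff (degree_X_pow_le m)).mp (h _ (degree_X_pow_le m))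
    rw [coeff_X_pow_self, mul_one] at hXm
    exact (sub_eq_zero.mp hXm).symm
  · rintro rfl Φ hΦ
    exact (degree_HIV_le_iff hΦ).mpr (by ring)

/-- `H_IV` preserves the space of polynomials of degree ≤ m iff `a = mℏ`. -/
theorem stmt3 (ℏ a b t : ℂ) (hℏ : ℏ ≠ 0) (m : ℕ) :
    (∀ Φ : ℂ[X], Φ.degree ≤ m → (HIV ℏ a b t Φ).degree ≤ m) ↔ a = m * ℏ :=
  stmt3_general ℏ a b t m
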